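/- Let λ ∈ (ℤ_{≥0})^m be a partition with weakly increasing rearrangement λ⁻, let γ ∈ (ℤ_{≥0})^k, and for each rearrangement μ of λ define f(μ) = t^{ℓ(w_μ)} · ∏_{□ ∈ dg((λ⁻|γ))} (1 − q^{ℓ_{(λ⁻|γ)}(□)+1} t^{a_{(λ⁻|γ)}(□)}) / ∏_{□ ∈ dg((μ|γ))} (1 − q^{ℓ_{(μ|γ)}(□)+1} t^{a_{(μ|γ)}(□)}) ∈ K, where w_μ ∈ S_m is the minimal-length permutation with w_μ(λ⁻) = μ. Then f(λ⁻) = 1, and whenever 1 ≤ i ≤ m−1 and μ_i < μ_{i+1}, one has f(s_i μ) = f(μ) · (t − q^{ℓ(u)+1} t^{a(u)}) / (1 − q^{ℓ(u)+1} t^{a(u)}), where u = (i, μ_i + 1) and its leg ℓ(u) and arm a(u) are taken in the diagram of (s_i μ | γ). -/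
import Mathlib


noncomputable section
set_option synthInstance.maxHeartbeats 1000000
set_option maxHeartbeats 1000000

open MvPolynomial

/-- The diagram `dg(ν) = {(i,j) : 1 ≤ j ≤ ν_i}` of a composition `ν`. -/
def dgF (n : ℕ) (ν : Fin n → ℕ) : Finset (Fin n × ℕ) :=
  Finset.univ.biUnion fun i : Fin n => (Finset.Icc 1 (ν i)).image fun j => (i, j)

/-- The leg `ℓ_ν(i,j) = ν_i − j` of a box. -/
def legF (n : ℕ) (ν : Fin n → ℕ) (p : Fin n × ℕ) : ℕ := ν p.1 - p.2

/-- The arm `a_ν(i,j) = #{r < i : j ≤ ν_r ≤ ν_i} + #{r > i : j−1 ≤ ν_r < ν_i}` of a box. -/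
def armF (n : ℕ) (ν : Fin n → ℕ) (p : Fin n × ℕ) : ℕ :=
  (Finset.univ.filter fun r : Fin n => r < p.1 ∧ p.2 ≤ ν r ∧ ν r ≤ ν p.1).card +
  (Finset.univ.filter fun r : Fin n => p.1 < r ∧ p.2 - 1 ≤ ν r ∧ ν r < ν p.1).card

/-- The modified arm `ã_ν(i,j) = #{r < i : j ≤ ν_r ≤ ν_i} + #{r > i : j ≤ ν_r < ν_i}`. -/
def armModF (n : ℕ) (ν : Fin n → ℕ) (p : Fin n × ℕ) : ℕ :=
  (Finset.univ.filter fun r : Fin n => r < p.1 ∧ p.2 ≤ ν r ∧ ν r ≤ ν p.1).card +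
  (Finset.univ.filter fun r : Fin n => p.1 < r ∧ p.2 ≤ ν r ∧ ν r < ν p.1).card

/-- `K = ℚ(q,t)`. -/
abbrev Kq : Type := FractionRing (MvPolynomial (Fin 2) ℚ)

/-- The indeterminate `q`. -/
def qv : Kq := algebraMap (MvPolynomial (Fin 2) ℚ) Kq (X 0)

/-- The indeterminate `t`. -/
def tv : Kq := algebraMap (MvPolynomial (Fin 2) ℚ) Kq (X 1)

/-- The Coxeter length (number of inversions) of a permutation of `Fin m`. -/
def invLen (m : ℕ) (w : Equiv.Perm (Fin m)) : ℕ :=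
  (Finset.univ.filter fun p : Fin m × Fin m => p.1 < p.2 ∧ w p.2 < w p.1).card

/-- The minimal Coxeter length of a permutation `w` with `w(λ⁻) = μ`. -/
def minLen (m : ℕ) (lmin μ : Fin m → ℕ) : ℕ :=
  sInf {l : ℕ | ∃ w : Equiv.Perm (Fin m), (∀ j, μ j = lmin (w j)) ∧ invLen m w = l}

/-- The closed formula
`f(μ) = t^{ℓ(w_μ)} · ∏_{□ ∈ dg((λ⁻|γ))} (1 − q^{ℓ(□)+1} t^{a(□)}) /
∏_{□ ∈ dg((μ|γ))} (1 − q^{ℓ(□)+1} t^{a(□)})`. -/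
def coefF (m k : ℕ) (lmin : Fin m → ℕ) (γ : Fin k → ℕ) (μ : Fin m → ℕ) : Kq :=
  tv ^ (minLen m lmin μ) *
    (∏ p ∈ dgF (m + k) (Fin.append lmin γ),
      (1 - qv ^ (legF (m + k) (Fin.append lmin γ) p + 1) *
        tv ^ armF (m + k) (Fin.append lmin γ) p)) /
    (∏ p ∈ dgF (m + k) (Fin.append μ γ),
      (1 - qv ^ (legF (m + k) (Fin.append μ γ) p + 1) *
        tv ^ armF (m + k) (Fin.append μ γ) p))

/-! ### Auxiliary lemmas -/

lemma mem_dgF {n : ℕ} {ν : Fin n → ℕ} {p : Fin n × ℕ} :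
    p ∈ dgF n ν ↔ 1 ≤ p.2 ∧ p.2 ≤ ν p.1 := by
  simp only [dgF, Finset.mem_biUnion, Finset.mem_image, Finset.mem_Icc, Finset.mem_univ,
    true_and]
  constructor
  · rintro ⟨i, j, hj, rfl⟩; exact hj
  · rintro ⟨h1, h2⟩; exact ⟨p.1, p.2, ⟨h1, h2⟩, rfl⟩

lemma one_sub_qt_ne_zero (l a : ℕ) : (1 : Kq) - qv ^ (l + 1) * tv ^ a ≠ 0 := by
  rw [sub_ne_zero]
  intro h
  have hinj : Function.Injective (algebraMap (MvPolynomial (Fin 2) ℚ) Kq) :=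
    IsFractionRing.injective _ _
  have h2 : (1 : MvPolynomial (Fin 2) ℚ) = X 0 ^ (l + 1) * X 1 ^ a := by
    apply hinj
    rw [map_one, map_mul, map_pow, map_pow]
    exact h
  have h3 := congrArg constantCoeff h2
  simp [constantCoeff_X, zero_pow] at h3

/-- Abbreviation for the hook-type product over the diagram. -/
def prodD (n : ℕ) (ν : Fin n → ℕ) : Kq :=
  ∏ p ∈ dgF n ν, (1 - qv ^ (legF n ν p + 1) * tv ^ armF n ν p)

lemma prodD_eq (n : ℕ) (ν : Fin n → ℕ) :
    (∏ p ∈ dgF n ν, (1 - qv ^ (legF n ν p + 1) * tv ^ armF n ν p)) = prodD n ν := rfl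

lemma prodD_ne_zero (n : ℕ) (ν : Fin n → ℕ) : prodD n ν ≠ 0 :=
  Finset.prod_ne_zero_iff.mpr fun _ _ => one_sub_qt_ne_zero _ _

lemma armF_eq_sum {n : ℕ} (ν : Fin n → ℕ) (p : Fin n × ℕ) :
    armF n ν p = ∑ r : Fin n,
      ((if r < p.1 ∧ p.2 ≤ ν r ∧ ν r ≤ ν p.1 then 1 else 0) +
       (if p.1 < r ∧ p.2 - 1 ≤ ν r ∧ ν r < ν p.1 then 1 else 0)) := by
  rw [armF, Finset.card_filter, Finset.card_filter, ← Finset.sum_add_distrib]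

lemma armF_swap_key {n : ℕ} (ν : Fin n → ℕ) (A B : Fin n) (hB : (B : ℕ) = (A : ℕ) + 1)
    (hAB : ν A < ν B) (i : Fin n) (j : ℕ) (hj : 1 ≤ j) (r : Fin n) :
    ((if Equiv.swap A B r < Equiv.swap A B i ∧ j ≤ ν r ∧ ν r ≤ ν i then (1:ℕ) else 0) +
     (if Equiv.swap A B i < Equiv.swap A B r ∧ j - 1 ≤ ν r ∧ ν r < ν i then 1 else 0))
    = ((if r < i ∧ j ≤ ν r ∧ ν r ≤ ν i then 1 else 0) +
       (if i < r ∧ j - 1 ≤ ν r ∧ ν r < ν i then 1 else 0)) +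
      (if r = A ∧ i = B ∧ j = ν A + 1 then 1 else 0) := by
  have hABne : A ≠ B := fun h => by rw [h] at hB; omega
  have hBAne : B ≠ A := fun h => by rw [← h] at hB; omega
  rcases eq_or_ne r A with h | hrA
  · obtain rfl := h.symm
    rcases eq_or_ne i A with h2 | hiA
    · obtain rfl := h2.symm
      simp only [Equiv.swap_apply_left, Fin.lt_def, Fin.ext_iff, true_and, and_true]
      split_ifs <;> omega
    · rcases eq_or_ne i B with h3 | hiB
      · obtain rfl := h3.symm
        simp only [Equiv.swap_apply_left, Equiv.swap_apply_right, Fin.lt_def, Fin.ext_iff, true_and, and_true]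
        split_ifs <;> omega
      · have hiA' : (i : ℕ) ≠ (A : ℕ) := fun h => hiA (Fin.ext h)
        have hiB' : (i : ℕ) ≠ (B : ℕ) := fun h => hiB (Fin.ext h)
        rw [Equiv.swap_apply_left, Equiv.swap_apply_of_ne_of_ne hiA hiB]
        simp only [Fin.lt_def, Fin.ext_iff, true_and, and_true]
        split_ifs <;> omega
  · rcases eq_or_ne r B with h | hrB
    · obtain rfl := h.symm
      rcases eq_or_ne i A with h2 | hiA
      · obtain rfl := h2.symm
        simp only [Equiv.swap_apply_left, Equiv.swap_apply_right, Fin.lt_def, Fin.ext_iff, true_and, and_true]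
        split_ifs <;> omega
      · rcases eq_or_ne i B with h3 | hiB
        · obtain rfl := h3.symm
          simp only [Equiv.swap_apply_right, Fin.lt_def, Fin.ext_iff, true_and, and_true]
          split_ifs <;> omega
        · have hiA' : (i : ℕ) ≠ (A : ℕ) := fun h => hiA (Fin.ext h)
          have hiB' : (i : ℕ) ≠ (B : ℕ) := fun h => hiB (Fin.ext h)
          rw [Equiv.swap_apply_right, Equiv.swap_apply_of_ne_of_ne hiA hiB]
          simp only [Fin.lt_def, Fin.ext_iff, true_and, and_true]
          split_ifs <;> omega
    · have hrA' : (r : ℕ) ≠ (A : ℕ) := fun h => hrA (Fin.ext h)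
      have hrB' : (r : ℕ) ≠ (B : ℕ) := fun h => hrB (Fin.ext h)
      rcases eq_or_ne i A with h2 | hiA
      · obtain rfl := h2.symm
        rw [Equiv.swap_apply_left, Equiv.swap_apply_of_ne_of_ne hrA hrB]
        simp only [Fin.lt_def, Fin.ext_iff, true_and, and_true]
        split_ifs <;> omega
      · rcases eq_or_ne i B with h3 | hiB
        · obtain rfl := h3.symm
          rw [Equiv.swap_apply_right, Equiv.swap_apply_of_ne_of_ne hrA hrB]
          simp only [Fin.lt_def, Fin.ext_iff, true_and, and_true]
          split_ifs <;> omega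
        · rw [Equiv.swap_apply_of_ne_of_ne hrA hrB, Equiv.swap_apply_of_ne_of_ne hiA hiB]
          simp only [Fin.lt_def, Fin.ext_iff, true_and, and_true]
          split_ifs <;> omega

lemma armF_swap_eq (ν : Fin n → ℕ) (A B : Fin n) (hB : (B : ℕ) = (A : ℕ) + 1)
    (hAB : ν A < ν B) (i : Fin n) (j : ℕ) (hj : 1 ≤ j) :
    armF n (ν ∘ ⇑(Equiv.swap A B)) (Equiv.swap A B i, j) =
      armF n ν (i, j) + (if i = B ∧ j = ν A + 1 then 1 else 0) := by
  classical
  have hνi : (ν ∘ ⇑(Equiv.swap A B)) ((Equiv.swap A B i, j) : Fin n × ℕ).1 = ν i := by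
    simp [Equiv.swap_apply_self]
  have step1 : armF n (ν ∘ ⇑(Equiv.swap A B)) (Equiv.swap A B i, j)
      = ∑ r : Fin n,
        ((if r < Equiv.swap A B i ∧ j ≤ ν (Equiv.swap A B r) ∧ ν (Equiv.swap A B r) ≤ ν i
            then (1:ℕ) else 0) +
         (if Equiv.swap A B i < r ∧ j - 1 ≤ ν (Equiv.swap A B r) ∧ ν (Equiv.swap A B r) < ν i
            then 1 else 0)) := by
    rw [armF_eq_sum]
    apply Finset.sum_congr rfl
    intro r _
    simp only [hνi]
    rfl
  rw [step1, armF_eq_sum]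
  rw [Fintype.sum_equiv (Equiv.swap A B)
      (fun r => ((if r < Equiv.swap A B i ∧ j ≤ ν (Equiv.swap A B r) ∧ ν (Equiv.swap A B r) ≤ ν i
          then (1:ℕ) else 0) +
        (if Equiv.swap A B i < r ∧ j - 1 ≤ ν (Equiv.swap A B r) ∧ ν (Equiv.swap A B r) < ν i
          then 1 else 0)))
      (fun r => (((if r < i ∧ j ≤ ν r ∧ ν r ≤ ν i then (1:ℕ) else 0) +
        (if i < r ∧ j - 1 ≤ ν r ∧ ν r < ν i then 1 else 0)) +
        (if r = A ∧ i = B ∧ j = ν A + 1 then 1 else 0)))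
      (fun x => by
        simpa only [Equiv.swap_apply_self] using
          armF_swap_key ν A B hB hAB i j hj (Equiv.swap A B x))]
  rw [Finset.sum_add_distrib]
  congr 1
  by_cases hC : i = B ∧ j = ν A + 1
  · rw [if_pos hC]
    obtain ⟨hC1, hC2⟩ := hC
    simp [hC1, hC2]
  · rw [if_neg hC]
    rw [Finset.sum_eq_zero]
    intro r _
    rw [if_neg]
    rintro ⟨-, hc⟩
    exact hC hc

lemma legF_swap_eq {n : ℕ} (ν : Fin n → ℕ) (A B : Fin n) (i : Fin n) (j : ℕ) :
    legF n (ν ∘ ⇑(Equiv.swap A B)) (Equiv.swap A B i, j) = legF n ν (i, j) := by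
  simp [legF, Function.comp_apply, Equiv.swap_apply_self]

lemma prodD_swap {n : ℕ} (ν : Fin n → ℕ) (A B : Fin n) (hB : (B : ℕ) = (A : ℕ) + 1)
    (hAB : ν A < ν B) :
    tv * prodD n ν *
        (1 - qv ^ (legF n (ν ∘ ⇑(Equiv.swap A B)) (A, ν A + 1) + 1) *
          tv ^ armF n (ν ∘ ⇑(Equiv.swap A B)) (A, ν A + 1)) =
      prodD n (ν ∘ ⇑(Equiv.swap A B)) *
        (tv - qv ^ (legF n (ν ∘ ⇑(Equiv.swap A B)) (A, ν A + 1) + 1) *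
          tv ^ armF n (ν ∘ ⇑(Equiv.swap A B)) (A, ν A + 1)) := by
  classical
  have hABne : A ≠ B := fun h => by rw [h] at hB; omega
  have hswapB : Equiv.swap A B B = A := Equiv.swap_apply_right A B
  have hswapA : Equiv.swap A B A = B := Equiv.swap_apply_left A B
  have hν'A : (ν ∘ ⇑(Equiv.swap A B)) A = ν B := by simp [hswapA]
  have hν'B : (ν ∘ ⇑(Equiv.swap A B)) B = ν A := by simp [hswapB]
  have hu' : ((B, ν A + 1) : Fin n × ℕ) ∈ dgF n ν := mem_dgF.mpr ⟨by omega, by simp; omega⟩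
  have hu : ((A, ν A + 1) : Fin n × ℕ) ∈ dgF n (ν ∘ ⇑(Equiv.swap A B)) :=
    mem_dgF.mpr ⟨by omega, by simp only [hν'A]; omega⟩
  have hleg : legF n (ν ∘ ⇑(Equiv.swap A B)) (A, ν A + 1) = legF n ν (B, ν A + 1) := by
    simp [legF, hν'A]
  have harm : armF n (ν ∘ ⇑(Equiv.swap A B)) (A, ν A + 1) = armF n ν (B, ν A + 1) + 1 := by
    have := armF_swap_eq ν A B hB hAB B (ν A + 1) (by omega)
    rw [hswapB] at this
    simpa using this
  -- the products over the erased diagrams agree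
  have hR : ∏ p ∈ (dgF n ν).erase (B, ν A + 1),
        (1 - qv ^ (legF n ν p + 1) * tv ^ armF n ν p)
      = ∏ p ∈ (dgF n (ν ∘ ⇑(Equiv.swap A B))).erase (A, ν A + 1),
        (1 - qv ^ (legF n (ν ∘ ⇑(Equiv.swap A B)) p + 1) *
          tv ^ armF n (ν ∘ ⇑(Equiv.swap A B)) p) := by
    refine Finset.prod_bij' (fun p _ => (Equiv.swap A B p.1, p.2))
      (fun p _ => (Equiv.swap A B p.1, p.2)) ?_ ?_ ?_ ?_ ?_
    case refine_1 =>
      intro p hp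
      rw [Finset.mem_erase] at hp ⊢
      obtain ⟨hpne, hpmem⟩ := hp
      rw [mem_dgF] at hpmem ⊢
      refine ⟨?_, hpmem.1, ?_⟩
      · intro hcon
        apply hpne
        have hc1 : Equiv.swap A B p.1 = A := congrArg Prod.fst hcon
        have hc2 : p.2 = ν A + 1 := congrArg Prod.snd hcon
        have hp1 : p.1 = B := by
          have := congrArg (Equiv.swap A B) hc1
          simpa [Equiv.swap_apply_self, hswapA] using this
        rw [Prod.ext_iff]
        exact ⟨hp1, hc2⟩
      · show p.2 ≤ (ν ∘ ⇑(Equiv.swap A B)) (Equiv.swap A B p.1)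
        simpa [Equiv.swap_apply_self] using hpmem.2
    case refine_2 =>
      intro p hp
      rw [Finset.mem_erase] at hp ⊢
      obtain ⟨hpne, hpmem⟩ := hp
      rw [mem_dgF] at hpmem ⊢
      refine ⟨?_, hpmem.1, ?_⟩
      · intro hcon
        apply hpne
        have hc1 : Equiv.swap A B p.1 = B := congrArg Prod.fst hcon
        have hc2 : p.2 = ν A + 1 := congrArg Prod.snd hcon
        have hp1 : p.1 = A := by
          have := congrArg (Equiv.swap A B) hc1
          simpa [Equiv.swap_apply_self, hswapB] using this
        rw [Prod.ext_iff]
        exact ⟨hp1, hc2⟩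
      · show p.2 ≤ ν (Equiv.swap A B p.1)
        have := hpmem.2
        simpa using this
    case refine_3 =>
      intro p _
      simp [Equiv.swap_apply_self]
    case refine_4 =>
      intro p _
      simp [Equiv.swap_apply_self]
    case refine_5 =>
      intro p hp
      rw [Finset.mem_erase] at hp
      obtain ⟨hpne, hpmem⟩ := hp
      rw [mem_dgF] at hpmem
      have harm' := armF_swap_eq ν A B hB hAB p.1 p.2 hpmem.1
      have hne : ¬(p.1 = B ∧ p.2 = ν A + 1) := by
        intro hcon
        exact hpne (Prod.ext_iff.mpr ⟨hcon.1, hcon.2⟩)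
      rw [if_neg hne, add_zero] at harm'
      have hlg := legF_swap_eq ν A B p.1 p.2
      have hp1 : ((p.1, p.2) : Fin n × ℕ) = p := rfl
      rw [hp1] at harm' hlg
      rw [harm', hlg]
  -- assemble
  rw [prodD, prodD, ← Finset.mul_prod_erase _ _ hu', ← Finset.mul_prod_erase _ _ hu, hR,
    hleg, harm]
  rw [pow_succ]
  ring

/-! ### Inversion counting -/

def invC (m : ℕ) (μ : Fin m → ℕ) : ℕ :=
  (Finset.univ.filter fun p : Fin m × Fin m => p.1 < p.2 ∧ μ p.2 < μ p.1).card

lemma minLen_eq {m : ℕ} {lmin μ : Fin m → ℕ} (hlmin : Monotone lmin)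
    (σ : Equiv.Perm (Fin m)) (hσ : ∀ j, μ j = lmin (σ j)) :
    minLen m lmin μ = invC m μ := by
  classical
  have hlm : lmin = μ ∘ ⇑σ.symm := by
    funext i
    simp [hσ (σ.symm i)]
  have hmono : Monotone (μ ∘ ⇑σ.symm) := hlm ▸ hlmin
  have hsort : μ ∘ ⇑(Tuple.sort μ) = lmin := by
    rw [hlm, ← Tuple.comp_sort_eq_comp_iff_monotone.mpr hmono]
  set w : Equiv.Perm (Fin m) := (Tuple.sort μ)⁻¹ with hw
  have hwval : ∀ x, Tuple.sort μ (w x) = x := fun x => by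
    simp [hw]
  have hwμ : ∀ j, μ j = lmin (w j) := by
    intro j
    rw [← hsort]
    simp only [Function.comp_apply, hwval]
  have hstab := (Tuple.eq_sort_iff (f := μ) (σ := Tuple.sort μ)).mp rfl
  -- general lower bound
  have hlb : ∀ w' : Equiv.Perm (Fin m), (∀ j, μ j = lmin (w' j)) → invC m μ ≤ invLen m w' := by
    intro w' hw'
    apply Finset.card_le_card
    intro p hp
    rw [Finset.mem_filter] at hp ⊢
    obtain ⟨hu, h1, h2⟩ := hp
    refine ⟨hu, h1, ?_⟩
    by_contra hcon
    push_neg at hcon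
    have : lmin (w' p.1) ≤ lmin (w' p.2) := hlmin hcon
    rw [← hw' p.1, ← hw' p.2] at this
    omega
  have hwlen : invLen m w = invC m μ := by
    unfold invLen invC
    congr 1
    apply Finset.filter_congr
    intro p _
    constructor
    · rintro ⟨h1, h2⟩
      refine ⟨h1, ?_⟩
      rcases lt_trichotomy (μ p.2) (μ p.1) with h | h | h
      · exact h
      · exfalso
        have := hstab.2 (w p.2) (w p.1) h2 (by rw [hwval, hwval, h])
        rw [hwval, hwval] at this
        exact absurd h1 (not_lt.mpr this.le)
      · exfalso
        have hlt : lmin (w p.1) < lmin (w p.2) := by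
          rw [← hwμ p.1, ← hwμ p.2]; exact h
        have : w p.1 < w p.2 := by
          by_contra hcon
          push_neg at hcon
          exact absurd (hlmin hcon) (not_le.mpr hlt)
        exact absurd h2 (not_lt.mpr this.le)
    · rintro ⟨h1, h2⟩
      refine ⟨h1, ?_⟩
      have hlt : lmin (w p.2) < lmin (w p.1) := by
        rw [← hwμ p.1, ← hwμ p.2]; exact h2
      by_contra hcon
      push_neg at hcon
      exact absurd (hlmin hcon) (not_le.mpr hlt)
  have hmem : invC m μ ∈ {l : ℕ | ∃ w' : Equiv.Perm (Fin m),
      (∀ j, μ j = lmin (w' j)) ∧ invLen m w' = l} := ⟨w, hwμ, hwlen⟩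
  refine le_antisymm (Nat.sInf_le hmem) (le_csInf ⟨_, hmem⟩ ?_)
  rintro l ⟨w', hw', rfl⟩
  exact hlb w' hw'

lemma swap_lt_swap {m : ℕ} {a b : Fin m} (hb : (b : ℕ) = (a : ℕ) + 1) {i j : Fin m}
    (hij : i < j) (hne : ¬(i = a ∧ j = b)) : Equiv.swap a b i < Equiv.swap a b j := by
  rcases eq_or_ne i a with h | hia
  · obtain rfl := h.symm
    have hjb : j ≠ b := fun h => hne ⟨rfl, h⟩
    have hja : j ≠ a := Fin.ne_of_gt hij
    rw [Equiv.swap_apply_left, Equiv.swap_apply_of_ne_of_ne hja hjb]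
    have h1 : (j : ℕ) ≠ (b : ℕ) := fun h => hjb (Fin.ext h)
    rw [Fin.lt_def] at hij ⊢
    omega
  · rcases eq_or_ne i b with h | hib
    · obtain rfl := h.symm
      have hja : j ≠ a := by
        intro h
        rw [h, Fin.lt_def] at hij
        omega
      have hjb : j ≠ b := Fin.ne_of_gt hij
      rw [Equiv.swap_apply_right, Equiv.swap_apply_of_ne_of_ne hja hjb]
      rw [Fin.lt_def] at hij ⊢
      omega
    · rcases eq_or_ne j a with h | hja
      · obtain rfl := h.symm
        rw [Equiv.swap_apply_of_ne_of_ne hia hib, Equiv.swap_apply_left]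
        rw [Fin.lt_def] at hij ⊢
        omega
      · rcases eq_or_ne j b with h | hjb
        · obtain rfl := h.symm
          rw [Equiv.swap_apply_of_ne_of_ne hia hib, Equiv.swap_apply_right]
          have h1 : (i : ℕ) ≠ (a : ℕ) := fun h => hia (Fin.ext h)
          rw [Fin.lt_def] at hij ⊢
          omega
        · rw [Equiv.swap_apply_of_ne_of_ne hia hib, Equiv.swap_apply_of_ne_of_ne hja hjb]
          exact hij

lemma invC_swap {m : ℕ} (μ : Fin m → ℕ) (a b : Fin m) (hb : (b : ℕ) = (a : ℕ) + 1)
    (hab : μ a < μ b) : invC m (μ ∘ ⇑(Equiv.swap a b)) = invC m μ + 1 := by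
  classical
  have hab' : a < b := by rw [Fin.lt_def]; omega
  have hmem : ((a, b) : Fin m × Fin m) ∈ Finset.univ.filter
      (fun p : Fin m × Fin m => p.1 < p.2 ∧
        (μ ∘ ⇑(Equiv.swap a b)) p.2 < (μ ∘ ⇑(Equiv.swap a b)) p.1) := by
    rw [Finset.mem_filter]
    refine ⟨Finset.mem_univ _, hab', ?_⟩
    show μ (Equiv.swap a b b) < μ (Equiv.swap a b a)
    rw [Equiv.swap_apply_left, Equiv.swap_apply_right]
    exact hab
  rw [invC, ← Finset.card_erase_add_one hmem]
  congr 1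
  rw [invC]
  refine Finset.card_bij' (fun p _ => (Equiv.swap a b p.1, Equiv.swap a b p.2))
    (fun p _ => (Equiv.swap a b p.1, Equiv.swap a b p.2)) ?_ ?_ ?_ ?_
  · intro p hp
    rw [Finset.mem_erase, Finset.mem_filter] at hp
    obtain ⟨hpne, -, h1, h2⟩ := hp
    rw [Finset.mem_filter]
    refine ⟨Finset.mem_univ _, ?_, h2⟩
    apply swap_lt_swap hb h1
    intro hcon
    exact hpne (Prod.ext_iff.mpr ⟨hcon.1, hcon.2⟩)
  · intro p hp
    rw [Finset.mem_filter] at hp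
    obtain ⟨-, h1, h2⟩ := hp
    rw [Finset.mem_erase, Finset.mem_filter]
    have hpne : ¬(p.1 = a ∧ p.2 = b) := by
      rintro ⟨hc1, hc2⟩
      rw [hc1, hc2] at h2
      exact absurd hab (not_lt.mpr h2.le)
    refine ⟨?_, Finset.mem_univ _, swap_lt_swap hb h1 hpne, ?_⟩
    · intro hcon
      have hc1 : Equiv.swap a b p.1 = a := congrArg Prod.fst hcon
      have hc2 : Equiv.swap a b p.2 = b := congrArg Prod.snd hcon
      have hp1 : p.1 = b := by
        have := congrArg (Equiv.swap a b) hc1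
        simpa [Equiv.swap_apply_self, Equiv.swap_apply_left] using this
      have hp2 : p.2 = a := by
        have := congrArg (Equiv.swap a b) hc2
        simpa [Equiv.swap_apply_self, Equiv.swap_apply_right] using this
      rw [hp1, hp2, Fin.lt_def] at h1
      omega
    · show (μ ∘ ⇑(Equiv.swap a b)) (Equiv.swap a b p.2) <
        (μ ∘ ⇑(Equiv.swap a b)) (Equiv.swap a b p.1)
      simpa [Equiv.swap_apply_self] using h2
  · intro p _
    simp [Equiv.swap_apply_self]
  · intro p _
    simp [Equiv.swap_apply_self]

lemma append_swap {m k : ℕ} (μ : Fin m → ℕ) (γ : Fin k → ℕ) (a b : Fin m) :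
    Fin.append (μ ∘ ⇑(Equiv.swap a b)) γ =
      Fin.append μ γ ∘ ⇑(Equiv.swap (Fin.castAdd k a) (Fin.castAdd k b)) := by
  classical
  have hinj : Function.Injective (Fin.castAdd k (n := m)) := Fin.castAdd_injective m k
  funext r
  refine Fin.addCases (fun x => ?_) (fun x => ?_) r
  · rw [Fin.append_left, Function.comp_apply, Function.comp_apply,
      Function.Injective.swap_apply hinj, Fin.append_left]
  · have key : ∀ (c : Fin m), Fin.natAdd m x ≠ Fin.castAdd k c := by
      intro c h
      have hv : m + (x : ℕ) = (c : ℕ) := congrArg Fin.val h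
      have := c.isLt
      omega
    rw [Fin.append_right, Function.comp_apply, Equiv.swap_apply_of_ne_of_ne (key a) (key b),
      Fin.append_right]

lemma field_step (N D D' Q : Kq) (hD : D ≠ 0) (hD' : D' ≠ 0) (hQ : 1 - Q ≠ 0)
    (hkey : tv * D * (1 - Q) = D' * (tv - Q)) (c : ℕ) :
    tv ^ (c + 1) * N / D' = tv ^ c * N / D * (tv - Q) / (1 - Q) := by
  rw [div_mul_eq_mul_div, div_div, div_eq_div_iff hD' (mul_ne_zero hD hQ)]
  linear_combination (tv ^ c * N) * hkey

set_option maxHeartbeats 8000000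

/-- The closed formula satisfies the defining recurrence of the symmetrization
coefficients: `f(λ⁻) = 1`, and `f(s_i μ) = f(μ)·(t − q^{ℓ(u)+1}t^{a(u)})/(1 − q^{ℓ(u)+1}t^{a(u)})`
whenever `μ_i < μ_{i+1}` (1-indexed), where `u = (i, μ_i+1)` with statistics in the
diagram of `(s_i μ | γ)`. -/
theorem coefF_recurrence (m k : ℕ) (lam lmin : Fin m → ℕ) (γ : Fin k → ℕ)
    (hlam : Antitone lam) (hlmin : Monotone lmin)
    (hre : ∃ σ : Equiv.Perm (Fin m), ∀ j, lmin j = lam (σ j)) :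
    coefF m k lmin γ lmin = 1 ∧
    ∀ (μ : Fin m → ℕ), (∃ σ : Equiv.Perm (Fin m), ∀ j, μ j = lmin (σ j)) →
      ∀ (i : ℕ), (h1 : 1 ≤ i) → (h2 : i < m) →
        (hlt : μ ⟨i - 1, by omega⟩ < μ ⟨i, h2⟩) →
        let μ' : Fin m → ℕ := μ ∘ Equiv.swap ⟨i - 1, by omega⟩ ⟨i, h2⟩
        let u : Fin (m + k) × ℕ := (⟨i - 1, by omega⟩, μ ⟨i - 1, by omega⟩ + 1)
        coefF m k lmin γ μ' =
          coefF m k lmin γ μ *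
            (tv - qv ^ (legF (m + k) (Fin.append μ' γ) u + 1) *
                tv ^ armF (m + k) (Fin.append μ' γ) u) /
            (1 - qv ^ (legF (m + k) (Fin.append μ' γ) u + 1) *
                tv ^ armF (m + k) (Fin.append μ' γ) u) := by
  constructor
  · -- coefF lmin = 1
    have h0 : minLen m lmin lmin = 0 := by
      apply Nat.sInf_eq_zero.mpr
      left
      refine ⟨1, fun j => rfl, ?_⟩
      unfold invLen
      rw [Finset.filter_false_of_mem, Finset.card_empty]
      intro p _
      rintro ⟨hp1, hp2⟩
      simp only [Equiv.Perm.coe_one, id] at hp2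
      exact absurd hp2 (not_lt.mpr hp1.le)
    rw [coefF, h0, pow_zero, one_mul]
    exact div_self (prodD_ne_zero _ _)
  · intro μ hμ i h1 h2 hlt μ' u
    obtain ⟨σ, hσ⟩ := hμ
    set a : Fin m := ⟨i - 1, by omega⟩ with ha
    set b : Fin m := ⟨i, h2⟩ with hbdef
    have hbval : (b : ℕ) = (a : ℕ) + 1 := by simp [ha, hbdef]; omega
    set A : Fin (m + k) := ⟨i - 1, by omega⟩ with hA
    set B : Fin (m + k) := ⟨i, by omega⟩ with hB
    have hAcast : Fin.castAdd k a = A := by apply Fin.ext; rfl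
    have hBcast : Fin.castAdd k b = B := by apply Fin.ext; rfl
    have hBval : (B : ℕ) = (A : ℕ) + 1 := by simp [hA, hB]; omega
    set ν : Fin (m + k) → ℕ := Fin.append μ γ with hν
    have hνA : ν A = μ a := by rw [hν, ← hAcast]; exact Fin.append_left μ γ a
    have hνB : ν B = μ b := by rw [hν, ← hBcast]; exact Fin.append_left μ γ b
    have hAB : ν A < ν B := by rw [hνA, hνB]; exact hlt
    have hμ'def : μ' = μ ∘ ⇑(Equiv.swap a b) := rfl
    have happ : Fin.append μ' γ = ν ∘ ⇑(Equiv.swap A B) := by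
      rw [hμ'def, append_swap, hAcast, hBcast]
    -- minimal lengths
    have hml : minLen m lmin μ = invC m μ := minLen_eq hlmin σ hσ
    have hml' : minLen m lmin μ' = invC m μ + 1 := by
      rw [minLen_eq hlmin ((Equiv.swap a b).trans σ)
        (fun j => by rw [hμ'def]; exact hσ (Equiv.swap a b j)),
        hμ'def, invC_swap μ a b hbval hlt]
    -- the box u
    have huq : ((A, ν A + 1) : Fin (m + k) × ℕ) = u := by
      have : ν A + 1 = μ (⟨i - 1, by omega⟩ : Fin m) + 1 := by rw [hνA]
      rw [Prod.ext_iff]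
      exact ⟨rfl, this⟩
    rw [coefF, coefF, hml, hml', happ, ← huq, prodD_eq, prodD_eq, prodD_eq]
    exact field_step _ _ _ _ (prodD_ne_zero _ _) (prodD_ne_zero _ _)
      (one_sub_qt_ne_zero _ _) (prodD_swap ν A B hBval hAB) (invC m μ)
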